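/- Assume in addition that S : X^{++} → ℤ[X] satisfies the Donkin factorization S_ζ = S_{ζ^0+pρ}(S_{ζ^1+pζ^2+⋯})^{(1)} in the appropriate range, that S_{ν+pρ} = S¹_{ν+pρ} for all ν ∈ X^+_red, and that S_ν = S¹_ν for all ν ∈ X^+_red ∩ X^{++}. Then for every k ≥ 0 and every ζ ∈ X^+_k, S_ζ = S^{k+1}_ζ. -/

import Mathlib

/-!
Induction on `k`. Donkin's factorization and 6(a) give `S_ζ = S¹_{ζ⁰+pρ} · (S_{ζ'})^{(1)}` with
`ζ' = ζ¹ + pζ² + ⋯ ∈ X^+_{k-1}`, and the induction hypothesis turns `S_{ζ'}` into `S^k_{ζ'}`. The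
functions `S^h` satisfy the same factorization, `S^{h+2}_ζ = S¹_{ζ⁰+pρ} · (S^{h+1}_{ζ'})^{(1)}`:
by induction on `h`, because replacing the digits of `ζ` from place `h+1` on by `μ` commutes with
splitting off `ζ⁰`, and at `h = 0` this is the Andersen factorization of `S¹` combined with the
expansion `S¹ = Σ_μ x_{μ,·} S⁰_μ`. For `k = 0` the weight `ζ` is restricted and 6(b) applies.
-/

open Finset

/-- Base-`p` digit number `k` of a weight `ζ ∈ ℤ^I` (coordinatewise). -/
def digit (p k : ℕ) {I : Type*} (ζ : I → ℤ) : I → ℤ :=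
  fun i => (ζ i / (p : ℤ) ^ k) % (p : ℤ)

/-- The truncated tail `ζ^j + p ζ^{j+1} + p² ζ^{j+2} + ⋯` of the base-`p` expansion. -/
noncomputable def tailFrom (p j : ℕ) {I : Type*} (ζ : I → ℤ) : I → ℤ :=
  fun i => ∑ᶠ k : ℕ, (p : ℤ) ^ k * digit p (j + k) ζ i

/-- Dominant weights `X^+`. -/
def dominant {I : Type*} (ζ : I → ℤ) : Prop := ∀ i, 0 ≤ ζ i

/-- Strictly dominant weights `X^{++} = X^+ + ρ`. -/
def strictDom {I : Type*} (ζ : I → ℤ) : Prop := ∀ i, 1 ≤ ζ i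

/-- `p`-restricted weights `X^+_red`. -/
def restricted (p : ℕ) {I : Type*} (ζ : I → ℤ) : Prop :=
  ∀ i, 0 ≤ ζ i ∧ ζ i ≤ (p : ℤ) - 1

/-- The Weyl vector `ρ` (all coordinates equal to `1` in fundamental weight coordinates). -/
def rho {I : Type*} : I → ℤ := fun _ => 1

/-- The Frobenius twist `ξ ↦ ξ^{(h)}`, sending `e^λ` to `e^{p^h λ}`, as a ring
homomorphism of the group ring `ℤ[X]`, `X = ℤ^I`. -/
noncomputable def twist (p h : ℕ) {I : Type*} :
    AddMonoidAlgebra ℤ (I → ℤ) →+* AddMonoidAlgebra ℤ (I → ℤ) :=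
  AddMonoidAlgebra.mapDomainRingHom ℤ
    (AddMonoidHom.mk' (fun l => ((p : ℤ) ^ h) • l) (fun a b => smul_add _ a b))

/-- The functions `S^h` of no. 4 of the paper, defined inductively from `S¹` by
`S^h_ζ = Σ_{μ ∈ X^{++}} x_{μ, ζ^{h−1}+pζ^h+⋯} · S^{h−1}_{ζ^0+pζ^1+⋯+p^{h−2}ζ^{h−2}+p^{h−1}μ}`,
where `x_{μ,ζ}` are the coefficients of `S¹` in the basis `S⁰` (extended by zero off
`X^{++}`); by convention `S^0 := S¹`. -/
noncomputable def Sh {I : Type*} (p : ℕ) (x : (I → ℤ) → (I → ℤ) → ℤ)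
    (S1 : (I → ℤ) → AddMonoidAlgebra ℤ (I → ℤ)) :
    ℕ → (I → ℤ) → AddMonoidAlgebra ℤ (I → ℤ)
  | 0 => S1
  | 1 => S1
  | (h + 2) => fun ζ => ∑ᶠ μ : I → ℤ, x μ (tailFrom p (h + 1) ζ) •
      Sh p x S1 (h + 1)
        ((∑ j ∈ Finset.range (h + 1), (p : ℤ) ^ j • digit p j ζ) + (p : ℤ) ^ (h + 1) • μ)

namespace Int

theorem emod_mul_eq_emod_add_mul_ediv_emod (a : ℤ) {b : ℤ} (hb : 0 ≤ b) (c : ℤ) :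
    a % (b * c) = a % b + b * (a / b % c) := by
  rw [emod_def, emod_def (a / b), ← ediv_ediv_of_nonneg hb, emod_def]
  ring

theorem sum_range_pow_mul_ediv_pow_emod (a : ℤ) {p : ℤ} (hp : 0 ≤ p) (K : ℕ) :
    ∑ k ∈ Finset.range K, p ^ k * (a / p ^ k % p) = a % p ^ K := by
  induction K with
  | zero => simp
  | succ K ih =>
    rw [Finset.sum_range_succ, ih, pow_succ, emod_mul_eq_emod_add_mul_ediv_emod a (pow_nonneg hp K)]

theorem finsum_pow_mul_ediv_pow_emod {a p : ℤ} (ha : 0 ≤ a) (hp : 1 < p) :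
    ∑ᶠ k : ℕ, p ^ k * (a / p ^ k % p) = a := by
  obtain ⟨K, hK⟩ := pow_unbounded_of_one_lt a hp
  have hsupp : (Function.support fun k : ℕ => p ^ k * (a / p ^ k % p)) ⊆ Finset.range K := by
    intro k hk
    by_contra hkK
    have hlt : a < p ^ k :=
      hK.trans_le (pow_le_pow_right₀ hp.le (by simpa using hkK))
    simp [ediv_eq_zero_of_lt ha hlt] at hk
  rw [finsum_eq_sum_of_support_subset _ hsupp, sum_range_pow_mul_ediv_pow_emod a (by omega),
    emod_eq_of_lt ha hK]

theorem emod_mul_add_mul_emod_left (a m p q : ℤ) : (a % (p * q) + p * q * m) % p = a % p := by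
  rw [mul_assoc, add_mul_emod_self_left, emod_emod_of_dvd a (dvd_mul_right p q)]

theorem emod_mul_add_mul_ediv_left (a m : ℤ) {p : ℤ} (hp : 0 < p) (q : ℤ) :
    (a % (p * q) + p * q * m) / p = a / p % q + q * m := by
  rw [emod_mul_eq_emod_add_mul_ediv_emod a hp.le, mul_assoc, add_assoc, ← mul_add,
    add_mul_ediv_left _ _ hp.ne', ediv_eq_zero_of_lt (emod_nonneg a hp.ne') (emod_lt_of_pos a hp),
    zero_add]

end Int

section Weights

variable {I : Type*} {p : ℕ}

theorem digit_zero (ζ : I → ℤ) : digit p 0 ζ = fun i => ζ i % p := by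
  funext i
  simp [digit]

theorem digit_succ (ζ : I → ℤ) (k : ℕ) : digit p (k + 1) ζ = digit p k fun i => ζ i / p := by
  funext i
  simp only [digit, pow_succ']
  rw [Int.ediv_ediv_of_nonneg (Int.natCast_nonneg p)]

theorem sum_range_pow_smul_digit (ζ : I → ℤ) (n : ℕ) :
    ∑ j ∈ range n, (p : ℤ) ^ j • digit p j ζ = fun i => ζ i % (p : ℤ) ^ n := by
  funext i
  simp only [Finset.sum_apply, Pi.smul_apply, smul_eq_mul, digit]
  exact Int.sum_range_pow_mul_ediv_pow_emod _ (Int.natCast_nonneg p) n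

theorem tailFrom_eq_ediv (hp : 2 ≤ p) {ζ : I → ℤ} (hζ : dominant ζ) (j : ℕ) :
    tailFrom p j ζ = fun i => ζ i / (p : ℤ) ^ j := by
  funext i
  simp only [tailFrom, digit, pow_add,
    ← Int.ediv_ediv_of_nonneg (pow_nonneg (Int.natCast_nonneg p) j)]
  exact Int.finsum_pow_mul_ediv_pow_emod (Int.ediv_nonneg (hζ i) (by positivity)) (by omega)

theorem tailFrom_one (hp : 2 ≤ p) {ζ : I → ℤ} (hζ : dominant ζ) :
    tailFrom p 1 ζ = fun i => ζ i / p := by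
  simp [tailFrom_eq_ediv hp hζ]

theorem dominant_ediv (hp : 2 ≤ p) {ζ : I → ℤ} (hζ : dominant ζ) : dominant fun i => ζ i / p :=
  fun i => Int.ediv_nonneg (hζ i) (by positivity)

theorem tailFrom_eq_zero (k : ℕ) {ζ : I → ℤ} (hzero : ∀ j, k < j → digit p j ζ = 0) :
    tailFrom p (k + 1) ζ = 0 := by
  funext i
  simp [tailFrom, fun m => hzero (k + 1 + m) (by omega)]

theorem restricted_emod (hp : 2 ≤ p) (ζ : I → ℤ) : restricted p fun i => ζ i % p := fun i =>
  ⟨Int.emod_nonneg _ (by omega), Int.le_sub_one_of_lt (Int.emod_lt_of_pos _ (by omega))⟩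

theorem strictDom_of_strictDom_digit {ζ : I → ℤ} (hζ : dominant ζ) {k : ℕ}
    (hk : strictDom (digit p k ζ)) : strictDom ζ := by
  intro i
  by_contra hi
  have hk := hk i
  simp [digit, show ζ i = 0 by linarith [hζ i]] at hk

end Weights

section Splice

variable {I : Type*} {p : ℕ}

/-- `spliceDigits p n ζ μ` is the paper's `ζ⁰ + pζ¹ + ⋯ + p^{n-1}ζ^{n-1} + p^n μ`. -/
def spliceDigits (p n : ℕ) (ζ μ : I → ℤ) : I → ℤ := fun i => ζ i % (p : ℤ) ^ n + (p : ℤ) ^ n * μ i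

theorem spliceDigits_zero (ζ μ : I → ℤ) : spliceDigits p 0 ζ μ = μ := by
  funext i
  simp [spliceDigits]

theorem spliceDigits_emod (ζ μ : I → ℤ) (n : ℕ) :
    (fun i => spliceDigits p (n + 1) ζ μ i % p) = fun i => ζ i % p := by
  funext i
  simp only [spliceDigits, pow_succ', Int.emod_mul_add_mul_emod_left]

theorem spliceDigits_ediv (hp : 2 ≤ p) (ζ μ : I → ℤ) (n : ℕ) :
    (fun i => spliceDigits p (n + 1) ζ μ i / p) = spliceDigits p n (fun i => ζ i / p) μ := by
  funext i
  simp only [spliceDigits, pow_succ']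
  exact Int.emod_mul_add_mul_ediv_left _ _ (by omega) _

theorem dominant_spliceDigits (hp : 2 ≤ p) (ζ : I → ℤ) {μ : I → ℤ} (hμ : dominant μ) (n : ℕ) :
    dominant (spliceDigits p n ζ μ) := fun i =>
  add_nonneg (Int.emod_nonneg _ (by positivity)) (mul_nonneg (by positivity) (hμ i))

theorem strictDom_spliceDigits (hp : 2 ≤ p) (ζ : I → ℤ) {μ : I → ℤ} (hμ : strictDom μ) (n : ℕ) :
    strictDom (spliceDigits p n ζ μ) := fun i => by
  show 1 ≤ ζ i % (p : ℤ) ^ n + (p : ℤ) ^ n * μ i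
  have h1 : (1 : ℤ) ≤ (p : ℤ) ^ n := one_le_pow₀ (by omega)
  have h2 : 0 ≤ ζ i % (p : ℤ) ^ n := Int.emod_nonneg _ (by positivity)
  have h3 : (1 : ℤ) ≤ (p : ℤ) ^ n * μ i := one_le_mul_of_one_le_of_one_le h1 (hμ i)
  exact le_add_of_nonneg_of_le h2 h3

end Splice

theorem mul_map_finsum_zsmul {α R S : Type*} [Ring R] [Ring S] (φ : R →+* S) (C : S)
    {c : α → ℤ} (hc : (Function.support c).Finite) (F : α → R) :
    C * φ (∑ᶠ a, c a • F a) = ∑ᶠ a, c a • (C * φ (F a)) := by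
  calc C * φ (∑ᶠ a, c a • F a) = C * ∑ᶠ a, c a • φ (F a) := by
        rw [map_finsum (f := fun a => c a • F a) φ
          (hc.subset (Function.support_smul_subset_left c F))]
        simp_rw [map_zsmul]
    _ = ∑ᶠ a, C * (c a • φ (F a)) :=
        mul_finsum' (fun a => c a • φ (F a)) _ (hc.subset (Function.support_smul_subset_left c _))
    _ = ∑ᶠ a, c a • (C * φ (F a)) := finsum_congr fun a => mul_smul_comm _ _ _

section Sh

variable {I : Type*} {p : ℕ} {x : (I → ℤ) → (I → ℤ) → ℤ}

theorem finsum_smul_congr_of_strictDom (hxsupp : ∀ μ ζ : I → ℤ, x μ ζ ≠ 0 → strictDom μ)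
    {A B : (I → ℤ) → AddMonoidAlgebra ℤ (I → ℤ)} (t : I → ℤ)
    (hAB : ∀ μ, strictDom μ → A μ = B μ) :
    ∑ᶠ μ, x μ t • A μ = ∑ᶠ μ, x μ t • B μ := by
  refine finsum_congr fun μ => ?_
  by_cases hμ : x μ t = 0
  · simp [hμ]
  · rw [hAB μ (hxsupp μ t hμ)]

theorem Sh_add_two_of_dominant (hp : 2 ≤ p) (S1 : (I → ℤ) → AddMonoidAlgebra ℤ (I → ℤ))
    {ζ : I → ℤ} (hζ : dominant ζ) (h : ℕ) :
    Sh p x S1 (h + 2) ζ = ∑ᶠ μ, x μ (fun i => ζ i / (p : ℤ) ^ (h + 1)) •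
      Sh p x S1 (h + 1) (spliceDigits p (h + 1) ζ μ) := by
  simp only [Sh, tailFrom_eq_ediv hp hζ, sum_range_pow_smul_digit]
  rfl

theorem Sh_add_two_eq_mul_twist (hp : 2 ≤ p) {S0 S1 : (I → ℤ) → AddMonoidAlgebra ℤ (I → ℤ)}
    (hxfin : ∀ ζ : I → ℤ, (Function.support fun μ => x μ ζ).Finite)
    (hxsupp : ∀ μ ζ : I → ℤ, x μ ζ ≠ 0 → strictDom μ)
    (hx : ∀ ζ : I → ℤ, strictDom ζ → S1 ζ = ∑ᶠ μ : I → ℤ, x μ ζ • S0 μ)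
    (hfact1 : ∀ ζ : I → ℤ, dominant ζ → strictDom (tailFrom p 1 ζ) →
      S1 ζ = S1 (digit p 0 ζ + (p : ℤ) • rho) * twist p 1 (S0 (tailFrom p 1 ζ)))
    (h : ℕ) {ζ : I → ℤ} (hζ : dominant ζ) (hζp : strictDom fun i => ζ i / p) :
    Sh p x S1 (h + 2) ζ =
      S1 ((fun i => ζ i % p) + (p : ℤ) • rho) * twist p 1 (Sh p x S1 (h + 1) fun i => ζ i / p) := by
  induction h generalizing ζ with
  | zero =>
    rw [Sh_add_two_of_dominant hp S1 hζ, Sh, hx _ hζp, mul_map_finsum_zsmul _ _ (hxfin _)]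
    simp only [zero_add, pow_one]
    refine finsum_smul_congr_of_strictDom hxsupp _ fun μ hμ => ?_
    have hsplice : dominant (spliceDigits p 1 ζ μ) :=
      dominant_spliceDigits hp ζ (fun i => zero_le_one.trans (hμ i)) 1
    have htail : tailFrom p 1 (spliceDigits p 1 ζ μ) = μ := by
      rw [tailFrom_one hp hsplice, spliceDigits_ediv hp, spliceDigits_zero]
    rw [hfact1 _ hsplice (by rwa [htail]), htail, digit_zero, spliceDigits_emod]
  | succ h ih =>
    rw [Sh_add_two_of_dominant hp S1 hζ, Sh_add_two_of_dominant hp S1 (dominant_ediv hp hζ),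
      mul_map_finsum_zsmul _ _ (hxfin _)]
    simp only [pow_succ' _ (h + 1), ← Int.ediv_ediv_of_nonneg (Int.natCast_nonneg p)]
    refine finsum_smul_congr_of_strictDom hxsupp _ fun μ hμ => ?_
    rw [ih (dominant_spliceDigits hp ζ (fun i => zero_le_one.trans (hμ i)) _)
      (spliceDigits_ediv hp ζ μ _ ▸ strictDom_spliceDigits hp _ hμ _),
      spliceDigits_emod, spliceDigits_ediv hp]

end Sh

theorem eq_mul_twist_of_donkin {I : Type*} {p : ℕ} (hp : 2 ≤ p)
    {S : (I → ℤ) → AddMonoidAlgebra ℤ (I → ℤ)}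
    (hdonkin : ∀ lam nu mu : I → ℤ, dominant lam → restricted p nu → dominant mu →
      lam + rho = nu + (p : ℤ) • (mu + rho) →
      S (lam + rho) = S (nu + (p : ℤ) • rho) * twist p 1 (S (mu + rho)))
    {ζ : I → ℤ} (hζp : strictDom fun i => ζ i / p) :
    S ζ = S ((fun i => ζ i % p) + (p : ℤ) • rho) * twist p 1 (S fun i => ζ i / p) := by
  have hζ : ∀ i, (p : ℤ) ≤ ζ i := fun i =>
    by simpa using (Int.le_ediv_iff_mul_le (by omega)).mp (hζp i)
  have hfact := hdonkin (ζ - rho) (fun i => ζ i % p) ((fun i => ζ i / p) - rho)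
    (fun i => by simp only [Pi.sub_apply, rho]; linarith [hζ i]) (restricted_emod hp ζ)
    (fun i => by simp only [Pi.sub_apply, rho]; linarith [hζp i])
    (by
      rw [sub_add_cancel, sub_add_cancel]
      funext i
      exact (Int.emod_add_mul_ediv _ _).symm)
  simpa only [sub_add_cancel] using hfact

theorem prop7_general {I : Type*} (p : ℕ) (hp : 2 ≤ p)
    (x : (I → ℤ) → (I → ℤ) → ℤ)
    (S S0 S1 : (I → ℤ) → AddMonoidAlgebra ℤ (I → ℤ))
    (hxfin : ∀ ζ : I → ℤ, (Function.support fun μ => x μ ζ).Finite)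
    (hxsupp : ∀ μ ζ : I → ℤ, x μ ζ ≠ 0 → strictDom μ)
    (hx : ∀ ζ : I → ℤ, strictDom ζ → S1 ζ = ∑ᶠ μ : I → ℤ, x μ ζ • S0 μ)
    (hfact1 : ∀ ζ : I → ℤ, dominant ζ → strictDom (tailFrom p 1 ζ) →
      S1 ζ = S1 (digit p 0 ζ + (p : ℤ) • rho) * twist p 1 (S0 (tailFrom p 1 ζ)))
    (hdonkin : ∀ lam nu mu : I → ℤ, dominant lam → restricted p nu → dominant mu →
      lam + rho = nu + (p : ℤ) • (mu + rho) →
      S (lam + rho) = S (nu + (p : ℤ) • rho) * twist p 1 (S (mu + rho)))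
    (h6a : ∀ nu : I → ℤ, restricted p nu → S (nu + (p : ℤ) • rho) = S1 (nu + (p : ℤ) • rho))
    (h6b : ∀ nu : I → ℤ, restricted p nu → strictDom nu → S nu = S1 nu)
    (k : ℕ) (ζ : I → ℤ) (hζ : dominant ζ)
    (htop : strictDom (digit p k ζ))
    (hzero : ∀ j, k < j → digit p j ζ = 0) :
    S ζ = Sh p x S1 (k + 1) ζ := by
  induction k generalizing ζ with
  | zero =>
    have hdiv : (fun i => ζ i / p) = 0 := (tailFrom_one hp hζ).symm.trans (tailFrom_eq_zero 0 hzero)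
    have hmod : (fun i => ζ i % (p : ℤ)) = ζ := by
      funext i
      simp [Int.emod_def, congrFun hdiv i]
    rw [digit_zero, hmod] at htop
    exact h6b ζ (hmod ▸ restricted_emod hp ζ) htop
  | succ k ih =>
    have hdigit : ∀ j, digit p j (fun i => ζ i / p) = digit p (j + 1) ζ :=
      fun j => (digit_succ ζ j).symm
    have hζp : strictDom fun i => ζ i / p :=
      strictDom_of_strictDom_digit (dominant_ediv hp hζ) (hdigit k ▸ htop)
    have hSdiv : S (fun i => ζ i / p) = Sh p x S1 (k + 1) (fun i => ζ i / p) :=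
      ih _ (dominant_ediv hp hζ) (by rwa [hdigit])
        fun j hj => by rw [hdigit]; exact hzero _ (by omega)
    rw [eq_mul_twist_of_donkin hp hdonkin hζp, h6a _ (restricted_emod hp ζ), hSdiv,
      Sh_add_two_eq_mul_twist hp hxfin hxsupp hx hfact1 k hζ hζp]

/-- Proposition 7 of the paper: assume in addition that
`S : X^{++} → ℤ[X]` satisfies the Donkin factorization, that `S_{ν+pρ} = S¹_{ν+pρ}` for
all `ν ∈ X^+_red` (6(a)), and `S_ν = S¹_ν` for all `ν ∈ X^+_red ∩ X^{++}` (6(b)).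
Then for every `k ≥ 0` and every `ζ ∈ X^+_k`, `S_ζ = S^{k+1}_ζ`. -/
theorem prop7 {I : Type*} [Fintype I] (p : ℕ) (hp : 2 ≤ p)
    (x : (I → ℤ) → (I → ℤ) → ℤ)
    (S S0 S1 : (I → ℤ) → AddMonoidAlgebra ℤ (I → ℤ))
    (hS0 : LinearIndependent ℤ (fun μ : {μ : I → ℤ // strictDom μ} => S0 μ.1))
    (hxfin : ∀ ζ : I → ℤ, (Function.support fun μ => x μ ζ).Finite)
    (hxsupp : ∀ μ ζ : I → ℤ, x μ ζ ≠ 0 → strictDom μ)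
    (hx : ∀ ζ : I → ℤ, strictDom ζ → S1 ζ = ∑ᶠ μ : I → ℤ, x μ ζ • S0 μ)
    (hfact1 : ∀ ζ : I → ℤ, dominant ζ → strictDom (tailFrom p 1 ζ) →
      S1 ζ = S1 (digit p 0 ζ + (p : ℤ) • rho) * twist p 1 (S0 (tailFrom p 1 ζ)))
    (hdonkin : ∀ lam nu mu : I → ℤ, dominant lam → restricted p nu → dominant mu →
      lam + rho = nu + (p : ℤ) • (mu + rho) →
      S (lam + rho) = S (nu + (p : ℤ) • rho) * twist p 1 (S (mu + rho)))
    (h6a : ∀ nu : I → ℤ, restricted p nu → S (nu + (p : ℤ) • rho) = S1 (nu + (p : ℤ) • rho))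
    (h6b : ∀ nu : I → ℤ, restricted p nu → strictDom nu → S nu = S1 nu)
    (k : ℕ) (ζ : I → ℤ) (hζ : dominant ζ)
    (htop : strictDom (digit p k ζ))
    (hzero : ∀ j, k < j → digit p j ζ = 0) :
    S ζ = Sh p x S1 (k + 1) ζ :=
  prop7_general p hp x S S0 S1 hxfin hxsupp hx hfact1 hdonkin h6a h6b k ζ hζ htop hzero
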